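/- arXiv:1004.4104 — 8 statements merged into one kernel-verified Lean document; each statement's English description precedes it below -/
import Mathlib

section
/- A germ G satisfies G* = G if and only if G is a maximal L1-dissipative germ, i.e., G is L1D and possesses no L1D extension other than itself. -/
noncomputable section

/-- Kruzhkov entropy flux `q(a,b) = sign(a-b)(f(a)-f(b))`. -/
def qflux (f : ℝ → ℝ) (a b : ℝ) : ℝ := Real.sign (a - b) * (f a - f b)

/-- A germ: a set of pairs in `U × U` satisfying the Rankine–Hugoniot condition. -/
def IsGerm (U : Set ℝ) (fl fr : ℝ → ℝ) (G : Set (ℝ × ℝ)) : Prop :=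
  G ⊆ U ×ˢ U ∧ ∀ p ∈ G, fl p.1 = fr p.2

/-- An L1-dissipative germ. -/
def IsL1D (U : Set ℝ) (fl fr : ℝ → ℝ) (G : Set (ℝ × ℝ)) : Prop :=
  IsGerm U fl fr G ∧ ∀ p ∈ G, ∀ p' ∈ G, qflux fr p.2 p'.2 ≤ qflux fl p.1 p'.1

/-- The dual germ `G*`. -/
def dualGerm (U : Set ℝ) (fl fr : ℝ → ℝ) (G : Set (ℝ × ℝ)) : Set (ℝ × ℝ) :=
  {p | p ∈ U ×ˢ U ∧ fl p.1 = fr p.2 ∧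
    ∀ p' ∈ G, qflux fr p'.2 p.2 ≤ qflux fl p'.1 p.1}

/-- A maximal L1-dissipative germ. -/
def MaximalL1D (U : Set ℝ) (fl fr : ℝ → ℝ) (G : Set (ℝ × ℝ)) : Prop :=
  IsL1D U fl fr G ∧ ∀ G', IsL1D U fl fr G' → G ⊆ G' → G' = G

/-- A definite germ: an L1D germ with a unique maximal L1D extension. -/
def Definite (U : Set ℝ) (fl fr : ℝ → ℝ) (G : Set (ℝ × ℝ)) : Prop :=
  IsL1D U fl fr G ∧ ∃! M, MaximalL1D U fl fr M ∧ G ⊆ M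

lemma qflux_comm (f : ℝ → ℝ) (a b : ℝ) : qflux f a b = qflux f b a := by
  unfold qflux
  have h : b - a = -(a - b) := by ring
  rw [h, Real.sign_neg]
  ring

lemma qflux_self (f : ℝ → ℝ) (a : ℝ) : qflux f a a = 0 := by
  simp [qflux]

theorem dual_eq_self_iff_maximalL1D
    (l r : ℝ) (U : Set ℝ) (hU : U = Set.Icc l r)
    (fl fr : ℝ → ℝ) (hfl : ContinuousOn fl U) (hfr : ContinuousOn fr U)
    (G : Set (ℝ × ℝ)) (hG : IsGerm U fl fr G) :
    dualGerm U fl fr G = G ↔ MaximalL1D U fl fr G := by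
  constructor
  · intro hdual
    refine ⟨⟨hG, ?_⟩, ?_⟩
    · intro p hp p' hp'
      have hpd : p ∈ dualGerm U fl fr G := hdual.symm ▸ hp
      have := hpd.2.2 p' hp'
      rw [qflux_comm fr, qflux_comm fl]
      exact this
    · intro G' hG' hsub
      apply Set.Subset.antisymm _ hsub
      intro p hp
      have hpd : p ∈ dualGerm U fl fr G := by
        refine ⟨hG'.1.1 hp, hG'.1.2 p hp, ?_⟩
        intro p' hp'
        exact hG'.2 p' (hsub hp') p hp
      exact hdual ▸ hpd
  · intro ⟨⟨_, hdiss⟩, hmax⟩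
    apply Set.Subset.antisymm
    · -- dualGerm ⊆ G, via maximality applied to G ∪ {p}
      intro p hp
      obtain ⟨hpU, hpRH, hpq⟩ := hp
      have hext : IsL1D U fl fr (insert p G) := by
        refine ⟨⟨?_, ?_⟩, ?_⟩
        · intro x hx
          rcases hx with hx | hx
          · exact hx ▸ hpU
          · exact hG.1 hx
        · intro x hx
          rcases hx with hx | hx
          · exact hx ▸ hpRH
          · exact hG.2 x hx
        · intro x hx y hy
          rcases hx with hx | hx <;> rcases hy with hy | hy
          · subst hx; subst hy; rw [qflux_self, qflux_self]
          · subst hx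
            rw [qflux_comm fr, qflux_comm fl]
            exact hpq y hy
          · subst hy
            exact hpq x hx
          · exact hdiss x hx y hy
      have := hmax _ hext (Set.subset_insert p G)
      rw [← this]
      exact Set.mem_insert p G
    · intro p hp
      refine ⟨hG.1 hp, hG.2 p hp, ?_⟩
      intro p' hp'
      exact hdiss p' hp' p hp
end
end

section
/- If a germ G is definite (i.e., G is L1D and possesses a unique maximal L1D extension), then (G*)* = G*. -/
noncomputable section

lemma isL1D_insert {U : Set ℝ} {fl fr : ℝ → ℝ} {G : Set (ℝ × ℝ)} {p : ℝ × ℝ}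
    (hG : IsL1D U fl fr G) (hp : p ∈ dualGerm U fl fr G) :
    IsL1D U fl fr (insert p G) := by
  obtain ⟨hpU, hpRH, hpd⟩ := hp
  refine ⟨⟨?_, ?_⟩, ?_⟩
  · intro x hx
    rcases hx with rfl | hx
    · exact hpU
    · exact hG.1.1 hx
  · intro x hx
    rcases hx with rfl | hx
    · exact hpRH
    · exact hG.1.2 x hx
  · intro x hx y hy
    rcases hx with rfl | hx <;> rcases hy with rfl | hy
    · rw [qflux_self, qflux_self]
    · rw [qflux_comm fr, qflux_comm fl]; exact hpd y hy
    · exact hpd x hx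
    · exact hG.2 x hx y hy

lemma exists_maximal_ext {U : Set ℝ} {fl fr : ℝ → ℝ} {G : Set (ℝ × ℝ)}
    (hG : IsL1D U fl fr G) : ∃ M, MaximalL1D U fl fr M ∧ G ⊆ M := by
  obtain ⟨M, hGM, hMmem, hMmax⟩ :=
    zorn_subset_nonempty {H | IsL1D U fl fr H}
      (fun c hcS hc hcne => by
        refine ⟨⋃₀ c, ⟨⟨?_, ?_⟩, ?_⟩, fun s hs => Set.subset_sUnion_of_mem hs⟩
        · intro x hx
          obtain ⟨A, hA, hxA⟩ := hx
          exact (hcS hA).1.1 hxA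
        · intro x hx
          obtain ⟨A, hA, hxA⟩ := hx
          exact (hcS hA).1.2 x hxA
        · intro x hx y hy
          obtain ⟨A, hA, hxA⟩ := hx
          obtain ⟨B, hB, hyB⟩ := hy
          rcases hc.total hA hB with h | h
          · exact (hcS hB).2 x (h hxA) y hyB
          · exact (hcS hA).2 x hxA y (h hyB)) G hG
  exact ⟨M, ⟨hMmem, fun G' hG' hMG' => subset_antisymm (hMmax hG' hMG') hMG'⟩, hGM⟩

theorem dual_dual_eq_dual_of_definite
    (l r : ℝ) (U : Set ℝ) (hU : U = Set.Icc l r)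
    (fl fr : ℝ → ℝ) (hfl : ContinuousOn fl U) (hfr : ContinuousOn fr U)
    (G : Set (ℝ × ℝ)) (hG : Definite U fl fr G) :
    dualGerm U fl fr (dualGerm U fl fr G) = dualGerm U fl fr G := by
  obtain ⟨hL, M, ⟨hMmax, hGM⟩, huniq⟩ := hG
  have hML : IsL1D U fl fr M := hMmax.1
  -- M ⊆ dualGerm of any subset of M
  have hMsub : ∀ H : Set (ℝ × ℝ), H ⊆ M → M ⊆ dualGerm U fl fr H := by
    intro H hHM p hp
    exact ⟨hML.1.1 hp, hML.1.2 p hp, fun p' hp' => hML.2 p' (hHM hp') p hp⟩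
  -- dualGerm G = M
  have hdG : dualGerm U fl fr G = M := by
    apply subset_antisymm
    · intro p hp
      obtain ⟨M', hM'max, hM'⟩ := exists_maximal_ext (isL1D_insert hL hp)
      have : M' = M := huniq M' ⟨hM'max, (Set.subset_insert p G).trans hM'⟩
      exact this ▸ hM' (Set.mem_insert p G)
    · exact hMsub G hGM
  rw [hdG]
  apply subset_antisymm
  · intro p hp
    have := hMmax.2 (insert p M) (isL1D_insert hML hp) (Set.subset_insert p M)
    exact this ▸ Set.mem_insert p M
  · exact hMsub M subset_rfl
end
end

section
/- If the dual germ G* of an L1-dissipative germ G is itself an L1-dissipative germ, then G is definite, i.e., G possesses a unique maximal L1D extension. -/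
noncomputable section

theorem definite_of_dual_L1D
    (l r : ℝ) (U : Set ℝ) (hU : U = Set.Icc l r)
    (fl fr : ℝ → ℝ) (hfl : ContinuousOn fl U) (hfr : ContinuousOn fr U)
    (G : Set (ℝ × ℝ)) (hG : IsL1D U fl fr G)
    (hdual : IsL1D U fl fr (dualGerm U fl fr G)) :
    Definite U fl fr G := by
  have hGsub : G ⊆ dualGerm U fl fr G := by
    intro p hp
    exact ⟨hG.1.1 hp, hG.1.2 p hp, fun p' hp' => hG.2 p' hp' p hp⟩
  have hMsub : ∀ M, IsL1D U fl fr M → G ⊆ M → M ⊆ dualGerm U fl fr G := by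
    intro M hM hGM p hp
    exact ⟨hM.1.1 hp, hM.1.2 p hp, fun p' hp' => hM.2 p' (hGM hp') p hp⟩
  have hmax : MaximalL1D U fl fr (dualGerm U fl fr G) := by
    refine ⟨hdual, fun G' hG' hsub => ?_⟩
    exact Set.Subset.antisymm (hMsub G' hG' (hGsub.trans hsub)) hsub
  refine ⟨hG, dualGerm U fl fr G, ⟨hmax, hGsub⟩, ?_⟩
  rintro M ⟨hMmax, hGM⟩
  exact (hMmax.2 _ hdual (hMsub M hMmax.1 hGM)).symm
end
end

section
/- Let f^l, f^r : ℝ → ℝ be continuous, and suppose there exist u_o^l, u_o^r ∈ ℝ such that f^{l,r} is strictly decreasing on (−∞, u_o^{l,r}] and strictly increasing on [u_o^{l,r}, ∞), with f^{l,r}(u_o^{l,r}) = 0. Then the Audusse–Perthame germ G_AP = {(u^l,u^r) : f^l(u^l) = f^r(u^r) and sign(u^l − u_o^l) = sign(u^r − u_o^r)} is an L1-dissipative germ. -/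
noncomputable section

lemma bathtub_nonneg (f : ℝ → ℝ) (u0 : ℝ)
    (h1 : StrictAntiOn f (Set.Iic u0)) (h2 : StrictMonoOn f (Set.Ici u0))
    (h0 : f u0 = 0) (x : ℝ) : 0 ≤ f x := by
  rcases lt_trichotomy x u0 with h | h | h
  · have := h1 h.le (le_refl u0) h
    linarith
  · simp [h, h0]
  · have := h2 (le_refl u0) h.le h
    linarith

lemma bathtub_sign (f : ℝ → ℝ) (u0 : ℝ)
    (h1 : StrictAntiOn f (Set.Iic u0)) (h2 : StrictMonoOn f (Set.Ici u0))
    (h0 : f u0 = 0) {a a' : ℝ} (h : f a' < f a) :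
    Real.sign (a - a') = Real.sign (a - u0) := by
  have hpos : 0 < f a := lt_of_le_of_lt (bathtub_nonneg f u0 h1 h2 h0 a') h
  rcases lt_trichotomy a u0 with hc | hc | hc
  · -- a < u0 : show a < a'
    have haa : a < a' := by
      by_contra hn
      push_neg at hn
      rcases lt_or_eq_of_le hn with hlt | heq
      · have := h1 (le_of_lt (lt_trans hlt hc)) hc.le hlt
        linarith
      · subst heq; linarith
    rw [Real.sign_of_neg (by linarith), Real.sign_of_neg (by linarith)]
  · subst hc; simp [h0] at hpos
  · -- a > u0 : show a' < a
    have haa : a' < a := by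
      by_contra hn
      push_neg at hn
      rcases lt_or_eq_of_le hn with hlt | heq
      · have := h2 hc.le (le_of_lt (lt_trans hc hlt)) hlt
        linarith
      · subst heq; linarith
    rw [Real.sign_of_pos (by linarith), Real.sign_of_pos (by linarith)]

theorem audusse_perthame_germ_L1D
    (fl fr : ℝ → ℝ) (hfl : Continuous fl) (hfr : Continuous fr)
    (ulo uro : ℝ)
    (hfl1 : StrictAntiOn fl (Set.Iic ulo)) (hfl2 : StrictMonoOn fl (Set.Ici ulo))
    (hfr1 : StrictAntiOn fr (Set.Iic uro)) (hfr2 : StrictMonoOn fr (Set.Ici uro))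
    (hfl0 : fl ulo = 0) (hfr0 : fr uro = 0) :
    IsL1D Set.univ fl fr
      {p : ℝ × ℝ | fl p.1 = fr p.2 ∧ Real.sign (p.1 - ulo) = Real.sign (p.2 - uro)} := by
  constructor
  · constructor
    · intro p _; simp
    · intro p hp; exact hp.1
  · rintro ⟨a, b⟩ ⟨hab, hsab⟩ ⟨a', b'⟩ ⟨hab', hsab'⟩
    simp only at hab hsab hab' hsab' ⊢
    unfold qflux
    rcases lt_trichotomy (fl a') (fl a) with h | h | h
    · have h' : fr b' < fr b := by rw [← hab, ← hab']; exact h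
      have e1 := bathtub_sign fl ulo hfl1 hfl2 hfl0 h
      have e2 := bathtub_sign fr uro hfr1 hfr2 hfr0 h'
      rw [e1, e2, hsab, hab, hab']
    · have h' : fr b = fr b' := by rw [← hab, ← hab', h]
      rw [h, h']; simp
    · have h' : fr b < fr b' := by rw [← hab, ← hab']; exact h
      have e1 := bathtub_sign fl ulo hfl1 hfl2 hfl0 h
      have e2 := bathtub_sign fr uro hfr1 hfr2 hfr0 h'
      have r1 : Real.sign (a - a') = - Real.sign (a' - ulo) := by
        rw [show a - a' = -(a' - a) by ring, Real.sign_neg, e1]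
      have r2 : Real.sign (b - b') = - Real.sign (b' - uro) := by
        rw [show b - b' = -(b' - b) by ring, Real.sign_neg, e2]
      rw [r1, r2, hsab', hab, hab']
end
end

section
/- Let U ⊆ ℝ be a closed interval and f^l, f^r : U → ℝ continuous. Suppose the crossing condition holds: there exists u_χ ∈ U such that sign(z − u_χ)(f^r(z) − f^l(z)) ≥ 0 for all z ∈ U. Then the Karlsen–Risebro–Towers germ G_KRT is an L1-dissipative germ, where (u^l,u^r) ∈ G_KRT iff f^l(u^l) = f^r(u^r) =: s and either u^l = u^r, or u^l < u^r and max{f^l(z), f^r(z)} ≥ s for all z ∈ [u^l,u^r], or u^l > u^r and min{f^l(z), f^r(z)} ≤ s for all z ∈ [u^r,u^l]. -/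
noncomputable section

/-- The Karlsen–Risebro–Towers germ. -/
def KRT (U : Set ℝ) (fl fr : ℝ → ℝ) : Set (ℝ × ℝ) :=
  {p | p ∈ U ×ˢ U ∧ fl p.1 = fr p.2 ∧
    (p.1 = p.2 ∨
     (p.1 < p.2 ∧ ∀ z ∈ Set.Icc p.1 p.2, fl p.1 ≤ max (fl z) (fr z)) ∨
     (p.2 < p.1 ∧ ∀ z ∈ Set.Icc p.2 p.1, min (fl z) (fr z) ≤ fl p.1))}

/-- core continuity lemma: a function can't be ≥ s left of u and ≤ t right of u with t<s -/
lemma jumpLem (f : ℝ → ℝ) (α γ u s t : ℝ)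
    (hf : ContinuousOn f (Set.Icc α γ))
    (hαγ : α < γ) (hαu : α ≤ u) (huγ : u ≤ γ) (hst : t < s)
    (hα : s ≤ f α) (hγ : f γ ≤ t)
    (hlo : ∀ z, α ≤ z → z < u → s ≤ f z)
    (hhi : ∀ z, u < z → z ≤ γ → f z ≤ t) : False := by
  have h1 : s ≤ f u := by
    rcases eq_or_lt_of_le hαu with h | h
    · exact h ▸ hα
    · have hcont : ContinuousWithinAt f (Set.Ico α u) u :=
        (hf.continuousWithinAt ⟨hαu, huγ⟩).mono
          (fun z hz => ⟨hz.1, hz.2.le.trans huγ⟩)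
      have hne : (nhdsWithin u (Set.Ico α u)).NeBot :=
        mem_closure_iff_nhdsWithin_neBot.mp
          (by rw [closure_Ico h.ne]; exact ⟨hαu, le_refl u⟩)
      exact ge_of_tendsto hcont
        (Filter.eventually_of_mem self_mem_nhdsWithin (fun z hz => hlo z hz.1 hz.2))
  have h2 : f u ≤ t := by
    rcases eq_or_lt_of_le huγ with h | h
    · exact h ▸ hγ
    · have hcont : ContinuousWithinAt f (Set.Ioc u γ) u :=
        (hf.continuousWithinAt ⟨hαu, huγ⟩).mono
          (fun z hz => ⟨hαu.trans hz.1.le, hz.2⟩)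
      have hne : (nhdsWithin u (Set.Ioc u γ)).NeBot :=
        mem_closure_iff_nhdsWithin_neBot.mp
          (by rw [closure_Ioc h.ne]; exact ⟨le_refl u, huγ⟩)
      exact le_of_tendsto hcont
        (Filter.eventually_of_mem self_mem_nhdsWithin (fun z hz => hhi z hz.1 hz.2))
  linarith

lemma keyLem (l r : ℝ) (fl fr : ℝ → ℝ)
    (hfl : ContinuousOn fl (Set.Icc l r)) (hfr : ContinuousOn fr (Set.Icc l r))
    (uχ : ℝ)
    (hlt : ∀ z ∈ Set.Icc l r, z < uχ → fr z ≤ fl z)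
    (hgt : ∀ z ∈ Set.Icc l r, uχ < z → fl z ≤ fr z)
    (a b c d : ℝ)
    (hp : (a, b) ∈ KRT (Set.Icc l r) fl fr)
    (hq : (c, d) ∈ KRT (Set.Icc l r) fl fr)
    (hac : a < c) (hdb : d < b) : fl a ≤ fl c := by
  by_contra hst'
  push_neg at hst'
  obtain ⟨⟨haU, hbU⟩, hsb, hbr⟩ := hp
  obtain ⟨⟨hcU, hdU⟩, htd, hqbr⟩ := hq
  simp only at haU hbU hcU hdU hsb htd hbr hqbr
  have hsubP : Set.Icc a b ⊆ Set.Icc l r := Set.Icc_subset_Icc haU.1 hbU.2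
  have hsubQ : Set.Icc d c ⊆ Set.Icc l r := Set.Icc_subset_Icc hdU.1 hcU.2
  rcases hbr with hab | ⟨hab, hP⟩ | ⟨hba, hP⟩
  · -- a = b
    rcases hqbr with hcd | ⟨hcd, hQ⟩ | ⟨hdc, hQ⟩
    · linarith
    · linarith
    · have h := hQ a ⟨by linarith, hac.le⟩
      rw [show fr a = fl a by rw [hsb, hab], min_self] at h
      linarith
  · -- a < b
    have hmaxl : ∀ z ∈ Set.Icc a b, z < uχ → fl a ≤ fl z :=
      fun z hz hzu => (hP z hz).trans_eq (max_eq_left (hlt z (hsubP hz) hzu))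
    have hmaxr : ∀ z ∈ Set.Icc a b, uχ < z → fl a ≤ fr z :=
      fun z hz hzu => (hP z hz).trans_eq (max_eq_right (hgt z (hsubP hz) hzu))
    rcases hqbr with hcd | ⟨hcd, hQ⟩ | ⟨hdc, hQ⟩
    · -- c = d
      have h := hP c ⟨hac.le, by linarith⟩
      rw [show fr c = fl c by rw [htd, hcd], max_self] at h
      linarith
    · -- c < d : a < c < d < b
      rcases le_or_gt uχ c with h | h
      · have := hmaxr d ⟨by linarith, hdb.le⟩ (lt_of_le_of_lt h hcd)
        rw [← htd] at this
        linarith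
      · have := hmaxl c ⟨hac.le, by linarith⟩ h
        linarith
    · -- d < c : the hard case
      have hminr : ∀ z ∈ Set.Icc d c, uχ < z → fl z ≤ fl c :=
        fun z hz hzu => le_of_eq_of_le (min_eq_left (hgt z (hsubQ hz) hzu)).symm (hQ z hz)
      have hminl : ∀ z ∈ Set.Icc d c, z < uχ → fr z ≤ fl c :=
        fun z hz hzu => le_of_eq_of_le (min_eq_right (hlt z (hsubQ hz) hzu)).symm (hQ z hz)
      rcases le_total d a with h1 | h1
      · -- d ≤ a : jump for fl on [a,c]
        have hau : a ≤ uχ := by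
          by_contra hux; push_neg at hux
          exact absurd (hminr a ⟨h1, hac.le⟩ hux) (not_le.mpr hst')
        have huc : uχ ≤ c ∧ uχ ≤ b := by
          rcases le_total c b with h2 | h2
          · have hx : uχ ≤ c := by
              by_contra hux; push_neg at hux
              exact absurd (hmaxl c ⟨hac.le, h2⟩ hux) (not_le.mpr hst')
            exact ⟨hx, hx.trans h2⟩
          · have hx : uχ ≤ b := by
              by_contra hux; push_neg at hux
              have h3 := hminl b ⟨hdb.le, h2⟩ hux
              rw [← hsb] at h3
              exact absurd h3 (not_le.mpr hst')
            exact ⟨hx.trans h2, hx⟩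
        exact jumpLem fl a c uχ (fl a) (fl c)
          (hfl.mono (Set.Icc_subset_Icc haU.1 hcU.2)) hac hau huc.1 hst' le_rfl le_rfl
          (fun z hz hzu => hmaxl z ⟨hz, hzu.le.trans huc.2⟩ hzu)
          (fun z hzu hz => hminr z ⟨h1.trans (hau.trans hzu.le), hz⟩ hzu)
      · -- a ≤ d : jump for -fr on [d,b]
        have hdu : d ≤ uχ := by
          by_contra hux; push_neg at hux
          have h3 := hmaxr d ⟨h1, hdb.le⟩ hux
          rw [← htd] at h3
          exact absurd h3 (not_le.mpr hst')
        have hub : uχ ≤ b ∧ uχ ≤ c := by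
          rcases le_total c b with h2 | h2
          · have hx : uχ ≤ c := by
              by_contra hux; push_neg at hux
              exact absurd (hmaxl c ⟨hac.le, h2⟩ hux) (not_le.mpr hst')
            exact ⟨hx.trans h2, hx⟩
          · have hx : uχ ≤ b := by
              by_contra hux; push_neg at hux
              have h3 := hminl b ⟨hdb.le, h2⟩ hux
              rw [← hsb] at h3
              exact absurd h3 (not_le.mpr hst')
            exact ⟨hx, hx.trans h2⟩
        exact jumpLem (fun z => -fr z) d b uχ (-fl c) (-fl a)
          ((hfr.mono (Set.Icc_subset_Icc hdU.1 hbU.2)).neg) hdb hdu hub.1 (by linarith)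
          (by simp only [neg_le_neg_iff]; exact le_of_eq htd.symm)
          (by simp only [neg_le_neg_iff]; exact le_of_eq hsb)
          (fun z hz hzu => neg_le_neg (hminl z ⟨hz, hzu.le.trans hub.2⟩ hzu))
          (fun z hzu hz => neg_le_neg (hmaxr z ⟨h1.trans (hdu.trans hzu.le), hz⟩ hzu))
  · -- b < a
    rcases hqbr with hcd | ⟨hcd, hQ⟩ | ⟨hdc, hQ⟩
    · linarith
    · linarith
    · -- d < c : d < b < a < c
      have hminr : ∀ z ∈ Set.Icc d c, uχ < z → fl z ≤ fl c :=
        fun z hz hzu => le_of_eq_of_le (min_eq_left (hgt z (hsubQ hz) hzu)).symm (hQ z hz)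
      have hminl : ∀ z ∈ Set.Icc d c, z < uχ → fr z ≤ fl c :=
        fun z hz hzu => le_of_eq_of_le (min_eq_right (hlt z (hsubQ hz) hzu)).symm (hQ z hz)
      rcases lt_or_ge uχ a with h | h
      · have := hminr a ⟨by linarith, hac.le⟩ h
        linarith
      · have h3 := hminl b ⟨hdb.le, by linarith⟩ (lt_of_lt_of_le hba h)
        rw [← hsb] at h3
        linarith

theorem KRT_L1D_of_crossing
    (l r : ℝ) (fl fr : ℝ → ℝ)
    (hfl : ContinuousOn fl (Set.Icc l r)) (hfr : ContinuousOn fr (Set.Icc l r))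
    (hcross : ∃ uχ ∈ Set.Icc l r, ∀ z ∈ Set.Icc l r,
      0 ≤ Real.sign (z - uχ) * (fr z - fl z)) :
    IsL1D (Set.Icc l r) fl fr (KRT (Set.Icc l r) fl fr) := by
  obtain ⟨uχ, huχ, hsign⟩ := hcross
  have hlt : ∀ z ∈ Set.Icc l r, z < uχ → fr z ≤ fl z := by
    intro z hz h
    have hs := hsign z hz
    rw [Real.sign_of_neg (by linarith : z - uχ < 0)] at hs
    linarith
  have hgt : ∀ z ∈ Set.Icc l r, uχ < z → fl z ≤ fr z := by
    intro z hz h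
    have hs := hsign z hz
    rw [Real.sign_of_pos (by linarith : 0 < z - uχ)] at hs
    linarith
  refine ⟨⟨fun p hp => hp.1, fun p hp => hp.2.1⟩, ?_⟩
  rintro ⟨a, b⟩ hp ⟨c, d⟩ hq
  have hsb : fl a = fr b := hp.2.1
  have htd : fl c = fr d := hq.2.1
  unfold qflux
  simp only
  rcases lt_trichotomy a c with h1 | h1 | h1
  · rcases lt_trichotomy b d with h2 | h2 | h2
    · rw [Real.sign_of_neg (by linarith : a - c < 0),
        Real.sign_of_neg (by linarith : b - d < 0)]
      nlinarith [hsb, htd]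
    · have he : fl a = fl c := by rw [hsb, h2, ← htd]
      rw [h2, sub_self, Real.sign_zero, zero_mul, he, sub_self, mul_zero]
    · have hkey := keyLem l r fl fr hfl hfr uχ hlt hgt a b c d hp hq h1 h2
      rw [Real.sign_of_neg (by linarith : a - c < 0),
        Real.sign_of_pos (by linarith : 0 < b - d)]
      have e1 : fr b - fr d = fl a - fl c := by rw [← hsb, ← htd]
      nlinarith [e1, hkey]
  · have he : fr b = fr d := by rw [← hsb, h1, htd]
    rw [h1, sub_self, Real.sign_zero, zero_mul, he, sub_self, mul_zero]
  · rcases lt_trichotomy b d with h2 | h2 | h2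
    · have hkey := keyLem l r fl fr hfl hfr uχ hlt hgt c d a b hq hp h1 h2
      rw [Real.sign_of_pos (by linarith : 0 < a - c),
        Real.sign_of_neg (by linarith : b - d < 0)]
      have e1 : fr b - fr d = fl a - fl c := by rw [← hsb, ← htd]
      nlinarith [e1, hkey]
    · have he : fl a = fl c := by rw [hsb, h2, ← htd]
      rw [h2, sub_self, Real.sign_zero, zero_mul, he, sub_self, mul_zero]
    · rw [Real.sign_of_pos (by linarith : 0 < a - c),
        Real.sign_of_pos (by linarith : 0 < b - d)]
      nlinarith [hsb, htd]
end
end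

section
/- Let U ⊆ ℝ be a closed interval and f^l, f^r : U → ℝ continuous. The germ G_KRT admits no non-trivial L1-dissipative extension: if (û^l,û^r) ∉ G_KRT satisfies f^l(û^l) = f^r(û^r), then G_KRT ∪ {(û^l,û^r)} is not an L1-dissipative germ. -/
noncomputable section

lemma qflux_not_le {fl fr : ℝ → ℝ} {u v a b : ℝ}
    (hua : u < a) (hbv : b < v) (hts : fl a < fl u)
    (ha : fl a = fr b) (hu : fl u = fr v) :
    ¬ qflux fr v b ≤ qflux fl u a := by
  intro h
  unfold qflux at h
  rw [Real.sign_of_pos (sub_pos.mpr hbv), Real.sign_of_neg (sub_neg.mpr hua),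
    ← hu, ← ha] at h
  linarith

lemma qflux_not_le' {fl fr : ℝ → ℝ} {u v a b : ℝ}
    (hau : a < u) (hvb : v < b) (hts : fl u < fl a)
    (ha : fl a = fr b) (hu : fl u = fr v) :
    ¬ qflux fr v b ≤ qflux fl u a := by
  intro h
  unfold qflux at h
  rw [Real.sign_of_neg (sub_neg.mpr hvb), Real.sign_of_pos (sub_pos.mpr hau),
    ← hu, ← ha] at h
  linarith

theorem KRT_no_nontrivial_L1D_extension
    (l r : ℝ) (fl fr : ℝ → ℝ)
    (hfl : ContinuousOn fl (Set.Icc l r)) (hfr : ContinuousOn fr (Set.Icc l r))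
    (p : ℝ × ℝ) (hp : p ∈ (Set.Icc l r) ×ˢ (Set.Icc l r))
    (hRH : fl p.1 = fr p.2) (hnot : p ∉ KRT (Set.Icc l r) fl fr) :
    ¬ IsL1D (Set.Icc l r) fl fr (insert p (KRT (Set.Icc l r) fl fr)) := by
  intro hL1D
  obtain ⟨hgerm, hdiss⟩ := hL1D
  have hsub1 : p.1 ∈ Set.Icc l r := hp.1
  have hsub2 : p.2 ∈ Set.Icc l r := hp.2
  rcases lt_trichotomy p.1 p.2 with hlt | heq | hgt
  · -- case p.1 < p.2 : the max condition fails at some z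
    have hz : ∃ z ∈ Set.Icc p.1 p.2, max (fl z) (fr z) < fl p.1 := by
      by_contra h
      push_neg at h
      exact hnot ⟨hp, hRH, Or.inr (Or.inl ⟨hlt, fun z hz => h z hz⟩)⟩
    obtain ⟨z, hzI, hzlt⟩ := hz
    have hIsub : Set.Icc p.1 p.2 ⊆ Set.Icc l r := Set.Icc_subset_Icc hsub1.1 hsub2.2
    have hg : ContinuousOn (fun x => max (fl x) (fr x)) (Set.Icc p.1 p.2) := by
      exact (hfl.mono hIsub).sup (hfr.mono hIsub)
    obtain ⟨w, hwI, hwmin0⟩ := isCompact_Icc.exists_isMinOn ⟨z, hzI⟩ hg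
    have hwmin : ∀ x ∈ Set.Icc p.1 p.2, max (fl w) (fr w) ≤ max (fl x) (fr x) :=
      fun x hx => hwmin0 hx
    have hts : max (fl w) (fr w) < fl p.1 := lt_of_le_of_lt (hwmin z hzI) hzlt
    have hw1 : p.1 < w := by
      rcases eq_or_lt_of_le hwI.1 with h | h
      · exact absurd hts (not_lt.mpr (by rw [← h]; exact le_max_left _ _))
      · exact h
    have hw2 : w < p.2 := by
      rcases eq_or_lt_of_le hwI.2 with h | h
      · exact absurd hts (not_lt.mpr (by rw [h, hRH]; exact le_max_right _ _))
      · exact h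
    rcases le_total (fr w) (fl w) with hcase | hcase
    · -- max is fl w; find β ∈ [w, p.2] with fr β = fl w
      have htw : max (fl w) (fr w) = fl w := max_eq_left hcase
      rw [htw] at hts hwmin
      have hIVT := intermediate_value_Icc hwI.2
        (hfr.mono (Set.Icc_subset_Icc (hIsub hwI).1 hsub2.2))
      obtain ⟨β, hβI, hβ⟩ := hIVT ⟨hcase, by rw [← hRH]; exact hts.le⟩
      have hβ2 : β < p.2 := lt_of_le_of_ne hβI.2 (by
        intro h; rw [h, ← hRH] at hβ; exact absurd hβ.symm (ne_of_lt hts))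
      have hβI' : β ∈ Set.Icc p.1 p.2 := ⟨hwI.1.trans hβI.1, hβI.2⟩
      have hq : (w, β) ∈ KRT (Set.Icc l r) fl fr := by
        refine ⟨⟨hIsub hwI, hIsub hβI'⟩, by simpa using hβ.symm, ?_⟩
        rcases eq_or_lt_of_le hβI.1 with h | h
        · exact Or.inl h
        · refine Or.inr (Or.inl ⟨h, fun x hx => ?_⟩)
          exact hwmin x ⟨hwI.1.trans hx.1, hx.2.trans hβI'.2⟩
      exact qflux_not_le hw1 hβ2 hts hβ.symm hRH
        (hdiss p (Set.mem_insert _ _) (w, β) (Set.mem_insert_of_mem _ hq))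
    · -- max is fr w; find α ∈ [p.1, w] with fl α = fr w
      have htw : max (fl w) (fr w) = fr w := max_eq_right hcase
      rw [htw] at hts hwmin
      have hIVT := intermediate_value_Icc' hwI.1
        (hfl.mono (Set.Icc_subset_Icc hsub1.1 (hIsub hwI).2))
      obtain ⟨α, hαI, hα⟩ := hIVT ⟨hcase, hts.le⟩
      have hα1 : p.1 < α := lt_of_le_of_ne hαI.1 (by
        intro h; rw [← h] at hα; exact absurd hα.symm (ne_of_lt hts))
      have hαI' : α ∈ Set.Icc p.1 p.2 := ⟨hαI.1, hαI.2.trans hwI.2⟩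
      have hq : (α, w) ∈ KRT (Set.Icc l r) fl fr := by
        refine ⟨⟨hIsub hαI', hIsub hwI⟩, by simpa using hα, ?_⟩
        rcases eq_or_lt_of_le hαI.2 with h | h
        · exact Or.inl h
        · refine Or.inr (Or.inl ⟨h, fun x hx => ?_⟩)
          rw [show fl α = fr w from hα]
          exact hwmin x ⟨hαI'.1.trans hx.1, hx.2.trans hwI.2⟩
      refine qflux_not_le hα1 hw2 (by rw [show fl α = fr w from hα]; exact hts)
        hα hRH
        (hdiss p (Set.mem_insert _ _) (α, w) (Set.mem_insert_of_mem _ hq))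
  · exact hnot ⟨hp, hRH, Or.inl heq⟩
  · -- case p.2 < p.1 : the min condition fails at some z
    have hz : ∃ z ∈ Set.Icc p.2 p.1, fl p.1 < min (fl z) (fr z) := by
      by_contra h
      push_neg at h
      exact hnot ⟨hp, hRH, Or.inr (Or.inr ⟨hgt, fun z hz => h z hz⟩)⟩
    obtain ⟨z, hzI, hzlt⟩ := hz
    have hIsub : Set.Icc p.2 p.1 ⊆ Set.Icc l r := Set.Icc_subset_Icc hsub2.1 hsub1.2
    have hg : ContinuousOn (fun x => min (fl x) (fr x)) (Set.Icc p.2 p.1) := by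
      exact (hfl.mono hIsub).inf (hfr.mono hIsub)
    obtain ⟨w, hwI, hwmax0⟩ := isCompact_Icc.exists_isMaxOn ⟨z, hzI⟩ hg
    have hwmax : ∀ x ∈ Set.Icc p.2 p.1, min (fl x) (fr x) ≤ min (fl w) (fr w) :=
      fun x hx => hwmax0 hx
    have hts : fl p.1 < min (fl w) (fr w) := lt_of_lt_of_le hzlt (hwmax z hzI)
    have hw1 : w < p.1 := by
      rcases eq_or_lt_of_le hwI.2 with h | h
      · exact absurd hts (not_lt.mpr (by rw [h]; exact min_le_left _ _))
      · exact h
    have hw2 : p.2 < w := by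
      rcases eq_or_lt_of_le hwI.1 with h | h
      · exact absurd hts (not_lt.mpr (by rw [← h, hRH]; exact min_le_right _ _))
      · exact h
    rcases le_total (fl w) (fr w) with hcase | hcase
    · -- min is fl w; find β ∈ [p.2, w] with fr β = fl w
      have htw : min (fl w) (fr w) = fl w := min_eq_left hcase
      rw [htw] at hts hwmax
      have hIVT := intermediate_value_Icc hwI.1
        (hfr.mono (Set.Icc_subset_Icc hsub2.1 (hIsub hwI).2))
      obtain ⟨β, hβI, hβ⟩ := hIVT ⟨by rw [← hRH]; exact hts.le, hcase⟩
      have hβ2 : p.2 < β := lt_of_le_of_ne hβI.1 (by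
        intro h; rw [← h, ← hRH] at hβ; exact absurd hβ.symm (ne_of_gt hts))
      have hβI' : β ∈ Set.Icc p.2 p.1 := ⟨hβI.1, hβI.2.trans hwI.2⟩
      have hq : (w, β) ∈ KRT (Set.Icc l r) fl fr := by
        refine ⟨⟨hIsub hwI, hIsub hβI'⟩, by simpa using hβ.symm, ?_⟩
        rcases eq_or_lt_of_le hβI.2 with h | h
        · exact Or.inl h.symm
        · refine Or.inr (Or.inr ⟨h, fun x hx => ?_⟩)
          exact hwmax x ⟨hβI'.1.trans hx.1, hx.2.trans hwI.2⟩
      exact qflux_not_le' hw1 hβ2 hts hβ.symm hRH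
        (hdiss p (Set.mem_insert _ _) (w, β) (Set.mem_insert_of_mem _ hq))
    · -- min is fr w; find α ∈ [w, p.1] with fl α = fr w
      have htw : min (fl w) (fr w) = fr w := min_eq_right hcase
      rw [htw] at hts hwmax
      have hIVT := intermediate_value_Icc' hwI.2
        (hfl.mono (Set.Icc_subset_Icc (hIsub hwI).1 hsub1.2))
      obtain ⟨α, hαI, hα⟩ := hIVT ⟨hts.le, hcase⟩
      have hα1 : α < p.1 := lt_of_le_of_ne hαI.2 (by
        intro h; rw [h] at hα; exact absurd hα (ne_of_lt hts))
      have hαI' : α ∈ Set.Icc p.2 p.1 := ⟨hwI.1.trans hαI.1, hαI.2⟩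
      have hq : (α, w) ∈ KRT (Set.Icc l r) fl fr := by
        refine ⟨⟨hIsub hαI', hIsub hwI⟩, by simpa using hα, ?_⟩
        rcases eq_or_lt_of_le hαI.1 with h | h
        · exact Or.inl h.symm
        · refine Or.inr (Or.inr ⟨h, fun x hx => ?_⟩)
          rw [show fl α = fr w from hα]
          exact hwmax x ⟨hwI.1.trans hx.1, hx.2.trans hαI'.2⟩
      refine qflux_not_le' hα1 hw2 (by rw [show fl α = fr w from hα]; exact hts)
        hα hRH
        (hdiss p (Set.mem_insert _ _) (α, w) (Set.mem_insert_of_mem _ hq))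
end
end

section
/- Let f^l, f^r : ℝ → ℝ be continuous. The vanishing viscosity germ G^o_VV is L1-dissipative, where (u^l,u^r) ∈ G^o_VV iff f^l(u^l) = f^r(u^r) =: s and either u^l = u^r; or u^l < u^r and (f^l(z) > s for all z ∈ (u^l,u^r] or f^r(z) > s for all z ∈ [u^l,u^r)); or u^l > u^r and (f^l(z) < s for all z ∈ [u^r,u^l) or f^r(z) < s for all z ∈ (u^r,u^l]). -/
noncomputable section

/-- The strict vanishing viscosity germ. -/
def GoVV (fl fr : ℝ → ℝ) : Set (ℝ × ℝ) :=
  {p | fl p.1 = fr p.2 ∧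
    (p.1 = p.2 ∨
     (p.1 < p.2 ∧ ((∀ z ∈ Set.Ioc p.1 p.2, fl p.1 < fl z) ∨
                   (∀ z ∈ Set.Ico p.1 p.2, fl p.1 < fr z))) ∨
     (p.2 < p.1 ∧ ((∀ z ∈ Set.Ico p.2 p.1, fl z < fl p.1) ∨
                   (∀ z ∈ Set.Ioc p.2 p.1, fr z < fl p.1))))}

/-- Key monotone-comparison lemma for the VV germ. -/
lemma GoVV_key (fl fr : ℝ → ℝ) {a b c d : ℝ}
    (h1 : (a, b) ∈ GoVV fl fr) (h2 : (c, d) ∈ GoVV fl fr)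
    (hac : a ≤ c) (hdb : d ≤ b) : fl a ≤ fl c := by
  by_contra hcon
  push_neg at hcon
  simp only [GoVV, Set.mem_setOf_eq] at h1 h2
  obtain ⟨e1, H1⟩ := h1
  obtain ⟨e2, H2⟩ := h2
  have hac' : a < c := by
    rcases eq_or_lt_of_le hac with h | h
    · exfalso; rw [h] at hcon; exact lt_irrefl _ hcon
    · exact h
  have hdb' : d < b := by
    rcases eq_or_lt_of_le hdb with h | h
    · exfalso; rw [h] at e2; linarith
    · exact h
  rcases H1 with hab | ⟨hab, P⟩ | ⟨hab, P⟩
  · -- a = b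
    subst hab
    rcases H2 with hcd | ⟨hcd, _⟩ | ⟨hcd, Q⟩
    · linarith
    · linarith
    · rcases Q with Q | Q
      · have := Q a ⟨hdb'.le, hac'⟩; linarith
      · have := Q a ⟨hdb', hac'.le⟩; linarith
  · -- a < b
    rcases P with P | P
    · -- ∀ z ∈ Ioc a b, fl a < fl z
      rcases H2 with hcd | ⟨hcd, _⟩ | ⟨hcd, Q⟩
      · subst hcd
        have := P c ⟨hac', hdb'.le⟩; linarith
      · have := P c ⟨hac', by linarith⟩; linarith
      · rcases Q with Q | Q
        · have hm : max a d < min b c := max_lt (lt_min hab hac') (lt_min hdb' hcd)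
          obtain ⟨z, hz1, hz2⟩ := exists_between hm
          have ha : a < z := lt_of_le_of_lt (le_max_left _ _) hz1
          have hd : d < z := lt_of_le_of_lt (le_max_right _ _) hz1
          have hb : z < b := lt_of_lt_of_le hz2 (min_le_left _ _)
          have hc : z < c := lt_of_lt_of_le hz2 (min_le_right _ _)
          have t1 := P z ⟨ha, hb.le⟩
          have t2 := Q z ⟨hd.le, hc⟩
          linarith
        · by_cases hbc : c ≤ b
          · have := P c ⟨hac', hbc⟩; linarith
          · push_neg at hbc
            have := Q b ⟨hdb', hbc.le⟩; linarith
    · -- ∀ z ∈ Ico a b, fl a < fr z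
      rcases H2 with hcd | ⟨hcd, _⟩ | ⟨hcd, Q⟩
      · subst hcd
        have := P c ⟨hac'.le, hdb'⟩; linarith
      · have := P d ⟨by linarith, hdb'⟩; linarith
      · rcases Q with Q | Q
        · by_cases had : a ≤ d
          · have := P d ⟨had, hdb'⟩; linarith
          · push_neg at had
            have := Q a ⟨had.le, hac'⟩; linarith
        · have hm : max a d < min b c := max_lt (lt_min hab hac') (lt_min hdb' hcd)
          obtain ⟨z, hz1, hz2⟩ := exists_between hm
          have ha : a < z := lt_of_le_of_lt (le_max_left _ _) hz1
          have hd : d < z := lt_of_le_of_lt (le_max_right _ _) hz1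
          have hb : z < b := lt_of_lt_of_le hz2 (min_le_left _ _)
          have hc : z < c := lt_of_lt_of_le hz2 (min_le_right _ _)
          have t1 := P z ⟨ha.le, hb⟩
          have t2 := Q z ⟨hd, hc.le⟩
          linarith
  · -- b < a
    rcases H2 with hcd | ⟨hcd, _⟩ | ⟨hcd, Q⟩
    · linarith
    · linarith
    · rcases Q with Q | Q
      · have := Q a ⟨by linarith, hac'⟩; linarith
      · have := Q b ⟨hdb', by linarith⟩; linarith

theorem GoVV_L1D (fl fr : ℝ → ℝ) (hfl : Continuous fl) (hfr : Continuous fr) :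
    IsL1D Set.univ fl fr (GoVV fl fr) := by
  refine ⟨⟨fun p _ => by simp, fun p hp => hp.1⟩, ?_⟩
  rintro ⟨a, b⟩ hp ⟨c, d⟩ hq
  have e1 : fl a = fr b := hp.1
  have e2 : fl c = fr d := hq.1
  have k1 : a ≤ c → d ≤ b → fl a ≤ fl c := fun h h' => GoVV_key fl fr hp hq h h'
  have k2 : c ≤ a → b ≤ d → fl c ≤ fl a := fun h h' => GoVV_key fl fr hq hp h h'
  show qflux fr b d ≤ qflux fl a c
  unfold qflux
  rw [← e1, ← e2]
  rcases lt_trichotomy a c with h | h | h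
  · rw [Real.sign_of_neg (by linarith : a - c < 0)]
    rcases lt_trichotomy b d with h' | h' | h'
    · rw [Real.sign_of_neg (by linarith : b - d < 0)]
    · rw [h', sub_self, Real.sign_zero]
      have : fl a = fl c := by rw [e1, e2, h']
      linarith
    · rw [Real.sign_of_pos (by linarith : (0:ℝ) < b - d)]
      have := k1 h.le h'.le
      linarith
  · rw [h]
    simp
  · rw [Real.sign_of_pos (by linarith : (0:ℝ) < a - c)]
    rcases lt_trichotomy b d with h' | h' | h'
    · rw [Real.sign_of_neg (by linarith : b - d < 0)]
      have := k2 h.le h'.le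
      linarith
    · rw [h', sub_self, Real.sign_zero]
      have : fl a = fl c := by rw [e1, e2, h']
      linarith
    · rw [Real.sign_of_pos (by linarith : (0:ℝ) < b - d)]
end
end

section
/- Let f^l, f^r : ℝ → ℝ be continuous and suppose the crossing condition holds: there exists u_χ such that sign(z − u_χ)(f^r(z) − f^l(z)) ≥ 0 for all z. Then G^o_VV ⊆ G_KRT; that is, every pair (u^l,u^r) satisfying the strict vanishing-viscosity condition also satisfies the Karlsen–Risebro–Towers condition. -/
noncomputable section

theorem GoVV_subset_KRT_of_crossing
    (fl fr : ℝ → ℝ) (hfl : Continuous fl) (hfr : Continuous fr)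
    (hcross : ∃ uχ : ℝ, ∀ z : ℝ, 0 ≤ Real.sign (z - uχ) * (fr z - fl z)) :
    GoVV fl fr ⊆ KRT Set.univ fl fr := by
  rintro ⟨ul, ur⟩ ⟨hrh, hcase⟩
  refine ⟨⟨trivial, trivial⟩, hrh, ?_⟩
  rcases hcase with h | ⟨hlt, h | h⟩ | ⟨hlt, h | h⟩
  · exact Or.inl h
  · refine Or.inr (Or.inl ⟨hlt, fun z hz => ?_⟩)
    rcases eq_or_lt_of_le hz.1 with he | hl
    · exact he ▸ le_max_left _ _
    · exact le_trans (le_of_lt (h z ⟨hl, hz.2⟩)) (le_max_left _ _)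
  · refine Or.inr (Or.inl ⟨hlt, fun z hz => ?_⟩)
    rcases eq_or_lt_of_le hz.2 with he | hl
    · exact le_trans (le_of_eq (hrh.trans (by rw [he]))) (le_max_right _ _)
    · exact le_trans (le_of_lt (h z ⟨hz.1, hl⟩)) (le_max_right _ _)
  · refine Or.inr (Or.inr ⟨hlt, fun z hz => ?_⟩)
    rcases eq_or_lt_of_le hz.2 with he | hl
    · exact le_trans (min_le_left _ _) (le_of_eq (by rw [he]))
    · exact le_trans (min_le_left _ _) (le_of_lt (h z ⟨hz.1, hl⟩))
  · refine Or.inr (Or.inr ⟨hlt, fun z hz => ?_⟩)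
    rcases eq_or_lt_of_le hz.1 with he | hl
    · exact le_trans (min_le_right _ _) (le_of_eq (by rw [← he, ← hrh]))
    · exact le_trans (min_le_right _ _) (le_of_lt (h z ⟨hl, hz.2⟩))
end
end
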